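/- arXiv:1812.01552 — 3 statements merged into one kernel-verified Lean document; each statement's English description precedes it below -/
import Mathlib

section
/- Let λ > 0, N > 0, Q ∈ ℝ, ρ > 0, and let v be the constant function v(x) = Q²/(2ρN) + (λ/(2ρ))(ln(2πeλ/N) - 1). Then v satisfies the HJB equation ρ v(x) = (CDx v''(x) + B v'(x) - Q)²/(2(N - D² v''(x))) + (λ/2)(ln(2πeλ/(N - D² v''(x))) - 1) + (1/2) C² x² v''(x) + A x v'(x) for all x ∈ ℝ and any constants A, B, C, D ∈ ℝ. -/
open Real

theorem stmt_4_general (lam N Q ρ A B C D : ℝ) (hρ : 0 < ρ) :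
    let v : ℝ → ℝ := fun _ =>
      Q ^ 2 / (2 * ρ * N) +
        lam / (2 * ρ) * (Real.log (2 * Real.pi * Real.exp 1 * lam / N) - 1)
    ∀ x : ℝ,
      ρ * v x =
        (C * D * x * deriv (deriv v) x + B * deriv v x - Q) ^ 2 /
            (2 * (N - D ^ 2 * deriv (deriv v) x)) +
          lam / 2 *
            (Real.log (2 * Real.pi * Real.exp 1 * lam / (N - D ^ 2 * deriv (deriv v) x)) - 1) +
          1 / 2 * C ^ 2 * x ^ 2 * deriv (deriv v) x + A * x * deriv v x := by
  intro v x
  simp only [v, deriv_const', mul_zero, add_zero, sub_zero, zero_sub, neg_sq]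
  field_simp [hρ.ne']

/-- The constant function `v(x) = Q²/(2ρN) + (λ/(2ρ))(ln(2πeλ/N) - 1)` satisfies
the HJB equation of the entropy-regularized LQ problem with state-independent
reward, for any coefficients `A, B, C, D`. -/
theorem stmt_4 (lam N Q ρ A B C D : ℝ) (hlam : 0 < lam) (hN : 0 < N) (hρ : 0 < ρ) :
    let v : ℝ → ℝ := fun _ =>
      Q ^ 2 / (2 * ρ * N) +
        lam / (2 * ρ) * (Real.log (2 * Real.pi * Real.exp 1 * lam / N) - 1)
    ∀ x : ℝ,
      ρ * v x =
        (C * D * x * deriv (deriv v) x + B * deriv v x - Q) ^ 2 /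
            (2 * (N - D ^ 2 * deriv (deriv v) x)) +
          lam / 2 *
            (Real.log (2 * Real.pi * Real.exp 1 * lam / (N - D ^ 2 * deriv (deriv v) x)) - 1) +
          1 / 2 * C ^ 2 * x ^ 2 * deriv (deriv v) x + A * x * deriv v x :=
  stmt_4_general lam N Q ρ A B C D hρ
end

section
/- Let M ≥ 0, N > 0, R, P, Q, A, B, C, D ∈ ℝ with R² < MN, and suppose ρ > 2A + C² + max((D²R² - 2NR(B+CD))/N, 0). Define k₂ = (1/2)·[(ρ-(2A+C²))N + 2(B+CD)R - D²M - √(((ρ-(2A+C²))N + 2(B+CD)R - D²M)² - 4((B+CD)² + (ρ-(2A+C²))D²)(R²-MN))] / ((B+CD)² + (ρ-(2A+C²))D²), assuming (B+CD)² + (ρ-(2A+C²))D² ≠ 0. Then k₂ < 0 and k₂ satisfies the quadratic equation ρ k₂ = (k₂(B+CD) - R)²/(N - k₂D²) + k₂(2A + C²) - M, and moreover N - k₂D² > 0. -/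
open Real

/-!
Write `r = ρ - (2A + C²)` and `b = B + CD`. Clearing the denominator `N - kD²`, the Riccati
equation becomes the quadratic `(b² + rD²) k² - (rN + 2bR - D²M) k + (R² - MN) = 0`. The
hypothesis on `ρ` gives `r > 0`, so its leading coefficient is nonnegative, hence positive,
while its constant term `R² - MN` is negative. Hence the roots have opposite signs and `k₂`, the smaller one, is
negative, which in turn makes `N - k₂D²` positive.
-/

section Quadratic

variable {a s c : ℝ}

theorem quadratic_discrim_nonneg (ha : 0 < a) (hc : c < 0) : 0 ≤ s ^ 2 - 4 * a * c := by
  nlinarith [sq_nonneg s]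

theorem quadratic_smaller_root_neg (ha : 0 < a) (hc : c < 0) :
    1 / 2 * (s - √(s ^ 2 - 4 * a * c)) / a < 0 := by
  have hs : s < √(s ^ 2 - 4 * a * c) := lt_sqrt_of_sq_lt (by nlinarith)
  exact div_neg_of_neg_of_pos (by linarith) ha

theorem quadratic_root_of_sq_eq_discrim {t : ℝ} (ha : a ≠ 0) (ht : t ^ 2 = s ^ 2 - 4 * a * c) :
    a * (1 / 2 * (s - t) / a) ^ 2 - s * (1 / 2 * (s - t) / a) + c = 0 := by
  field_simp
  linear_combination ht

end Quadratic

theorem riccati_of_quadratic {ρ α b M N R D k : ℝ} (hk : N - k * D ^ 2 ≠ 0)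
    (hq : (b ^ 2 + (ρ - α) * D ^ 2) * k ^ 2 - ((ρ - α) * N + 2 * b * R - D ^ 2 * M) * k
      + (R ^ 2 - M * N) = 0) :
    ρ * k = (k * b - R) ^ 2 / (N - k * D ^ 2) + k * α - M := by
  have h : (ρ - α) * k + M = (k * b - R) ^ 2 / (N - k * D ^ 2) := by
    rw [eq_div_iff hk]
    linear_combination -hq
  linarith

theorem stmt_5_general (M N R A B C D ρ : ℝ) (hN : 0 < N)
    (hR : R ^ 2 < M * N)
    (hρ : ρ > 2 * A + C ^ 2 + max ((D ^ 2 * R ^ 2 - 2 * N * R * (B + C * D)) / N) 0)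
    (hden : (B + C * D) ^ 2 + (ρ - (2 * A + C ^ 2)) * D ^ 2 ≠ 0) :
    let k₂ : ℝ :=
      1 / 2 * ((ρ - (2 * A + C ^ 2)) * N + 2 * (B + C * D) * R - D ^ 2 * M -
          Real.sqrt (((ρ - (2 * A + C ^ 2)) * N + 2 * (B + C * D) * R - D ^ 2 * M) ^ 2 -
            4 * ((B + C * D) ^ 2 + (ρ - (2 * A + C ^ 2)) * D ^ 2) * (R ^ 2 - M * N))) /
        ((B + C * D) ^ 2 + (ρ - (2 * A + C ^ 2)) * D ^ 2)
    k₂ < 0 ∧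
    ρ * k₂ = (k₂ * (B + C * D) - R) ^ 2 / (N - k₂ * D ^ 2) + k₂ * (2 * A + C ^ 2) - M ∧
    0 < N - k₂ * D ^ 2 := by
  intro k₂
  have hr : 0 < ρ - (2 * A + C ^ 2) := by
    linarith [le_max_right ((D ^ 2 * R ^ 2 - 2 * N * R * (B + C * D)) / N) 0]
  have ha : 0 < (B + C * D) ^ 2 + (ρ - (2 * A + C ^ 2)) * D ^ 2 :=
    lt_of_le_of_ne (by positivity) hden.symm
  have hc : R ^ 2 - M * N < 0 := by linarith
  have hk : k₂ < 0 := quadratic_smaller_root_neg ha hc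
  have hq := quadratic_root_of_sq_eq_discrim ha.ne' (sq_sqrt (quadratic_discrim_nonneg
    (s := (ρ - (2 * A + C ^ 2)) * N + 2 * (B + C * D) * R - D ^ 2 * M) ha hc))
  have hpos : 0 < N - k₂ * D ^ 2 := by nlinarith [sq_nonneg D]
  exact ⟨hk, riccati_of_quadratic hpos.ne' hq, hpos⟩

/-- The explicit root `k₂` of the Riccati-type quadratic equation for the
entropy-regularized LQ problem: `k₂ < 0`, it satisfies the quadratic equation,
and `N - k₂D² > 0`. -/
theorem stmt_5 (M N R P Q A B C D ρ : ℝ) (hM : 0 ≤ M) (hN : 0 < N)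
    (hR : R ^ 2 < M * N)
    (hρ : ρ > 2 * A + C ^ 2 + max ((D ^ 2 * R ^ 2 - 2 * N * R * (B + C * D)) / N) 0)
    (hden : (B + C * D) ^ 2 + (ρ - (2 * A + C ^ 2)) * D ^ 2 ≠ 0) :
    let k₂ : ℝ :=
      1 / 2 * ((ρ - (2 * A + C ^ 2)) * N + 2 * (B + C * D) * R - D ^ 2 * M -
          Real.sqrt (((ρ - (2 * A + C ^ 2)) * N + 2 * (B + C * D) * R - D ^ 2 * M) ^ 2 -
            4 * ((B + C * D) ^ 2 + (ρ - (2 * A + C ^ 2)) * D ^ 2) * (R ^ 2 - M * N))) /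
        ((B + C * D) ^ 2 + (ρ - (2 * A + C ^ 2)) * D ^ 2)
    k₂ < 0 ∧
    ρ * k₂ = (k₂ * (B + C * D) - R) ^ 2 / (N - k₂ * D ^ 2) + k₂ * (2 * A + C ^ 2) - M ∧
    0 < N - k₂ * D ^ 2 :=
  stmt_5_general M N R A B C D ρ hN hR hρ hden
end

section
/- Let α₂ < 0, N > 0, λ > 0, D ∈ ℝ, ρ > 0, and α₀, α₁ ∈ ℝ. Define w(x) = (1/2)α₂x² + α₁x + α₀ and v(x) = w(x) + (λ/(2ρ))(ln(2πeλ/(N - α₂D²)) - 1). Then w satisfies the classical HJB equation ρw(x) = (CDx w'' + B w' - Rx - Q)²/(2(N - D²w'')) + (1/2)(C²w'' - M)x² + (Aw' - P)x for all x if and only if v satisfies the exploratory HJB equation ρv(x) = (CDx v'' + B v' - Rx - Q)²/(2(N - D²v'')) + (λ/2)(ln(2πeλ/(N - D²v'')) - 1) + (1/2)(C²v'' - M)x² + (Av' - P)x for all x. -/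
open Real

theorem deriv_deriv_quadratic (a b c : ℝ) :
    deriv (deriv fun x : ℝ => 1 / 2 * a * x ^ 2 + b * x + c) = fun _ => a := by
  have hderiv : deriv (fun x : ℝ => 1 / 2 * a * x ^ 2 + b * x + c) = fun x => a * x + b := by
    ext x
    refine HasDerivAt.deriv ?_
    convert (((hasDerivAt_pow 2 x).const_mul (1 / 2 * a)).fun_add
      ((hasDerivAt_id' x).const_mul b)).add_const c using 1
    push_cast
    ring
  ext x
  rw [hderiv]
  simp

section HJB

variable (M N R P Q A B C D ρ lam : ℝ)

/-- The constant shift leaves all derivatives unchanged, and `ρ` times it is exactly the entropy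
term of the exploratory equation. -/
theorem exploratoryHJB_add_const_iff_classicalHJB {w : ℝ → ℝ} {α₂ : ℝ}
    (hw : deriv (deriv w) = fun _ => α₂) (hρ : ρ ≠ 0) :
    let v : ℝ → ℝ := fun x => w x +
      lam / (2 * ρ) * (Real.log (2 * Real.pi * Real.exp 1 * lam / (N - α₂ * D ^ 2)) - 1)
    (∀ x : ℝ,
      ρ * w x =
        (C * D * x * deriv (deriv w) x + B * deriv w x - R * x - Q) ^ 2 /
            (2 * (N - D ^ 2 * deriv (deriv w) x)) +
          1 / 2 * (C ^ 2 * deriv (deriv w) x - M) * x ^ 2 +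
          (A * deriv w x - P) * x) ↔
    (∀ x : ℝ,
      ρ * v x =
        (C * D * x * deriv (deriv v) x + B * deriv v x - R * x - Q) ^ 2 /
            (2 * (N - D ^ 2 * deriv (deriv v) x)) +
          lam / 2 *
            (Real.log (2 * Real.pi * Real.exp 1 * lam / (N - D ^ 2 * deriv (deriv v) x)) - 1) +
          1 / 2 * (C ^ 2 * deriv (deriv v) x - M) * x ^ 2 +
          (A * deriv v x - P) * x) := by
  intro v
  have hshift : ρ * (lam / (2 * ρ) *
      (Real.log (2 * Real.pi * Real.exp 1 * lam / (N - α₂ * D ^ 2)) - 1)) =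
      lam / 2 * (Real.log (2 * Real.pi * Real.exp 1 * lam / (N - α₂ * D ^ 2)) - 1) := by
    field_simp
  simp only [v, deriv_add_const', hw, mul_comm (D ^ 2) α₂, mul_add, hshift]
  refine forall_congr' fun x => ?_
  constructor <;> intro h <;> linarith

end HJB

theorem stmt_7_general (M N R P Q A B C D ρ lam α₀ α₁ α₂ : ℝ)
    (hρ : 0 < ρ) :
    let w : ℝ → ℝ := fun x => 1 / 2 * α₂ * x ^ 2 + α₁ * x + α₀
    let v : ℝ → ℝ := fun x => w x +
      lam / (2 * ρ) * (Real.log (2 * Real.pi * Real.exp 1 * lam / (N - α₂ * D ^ 2)) - 1)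
    (∀ x : ℝ,
      ρ * w x =
        (C * D * x * deriv (deriv w) x + B * deriv w x - R * x - Q) ^ 2 /
            (2 * (N - D ^ 2 * deriv (deriv w) x)) +
          1 / 2 * (C ^ 2 * deriv (deriv w) x - M) * x ^ 2 +
          (A * deriv w x - P) * x) ↔
    (∀ x : ℝ,
      ρ * v x =
        (C * D * x * deriv (deriv v) x + B * deriv v x - R * x - Q) ^ 2 /
            (2 * (N - D ^ 2 * deriv (deriv v) x)) +
          lam / 2 *
            (Real.log (2 * Real.pi * Real.exp 1 * lam / (N - D ^ 2 * deriv (deriv v) x)) - 1) +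
          1 / 2 * (C ^ 2 * deriv (deriv v) x - M) * x ^ 2 +
          (A * deriv v x - P) * x) :=
  exploratoryHJB_add_const_iff_classicalHJB M N R P Q A B C D ρ lam
    (deriv_deriv_quadratic α₂ α₁ α₀) hρ.ne'

/-- Solvability equivalence: the quadratic `w` solves the classical LQ HJB
equation iff its constant shift `v = w + (λ/(2ρ))(ln(2πeλ/(N - α₂D²)) - 1)`
solves the exploratory (entropy-regularized) LQ HJB equation. -/
theorem stmt_7 (M N R P Q A B C D ρ lam α₀ α₁ α₂ : ℝ)
    (hα₂ : α₂ < 0) (hN : 0 < N) (hlam : 0 < lam) (hρ : 0 < ρ) :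
    let w : ℝ → ℝ := fun x => 1 / 2 * α₂ * x ^ 2 + α₁ * x + α₀
    let v : ℝ → ℝ := fun x => w x +
      lam / (2 * ρ) * (Real.log (2 * Real.pi * Real.exp 1 * lam / (N - α₂ * D ^ 2)) - 1)
    (∀ x : ℝ,
      ρ * w x =
        (C * D * x * deriv (deriv w) x + B * deriv w x - R * x - Q) ^ 2 /
            (2 * (N - D ^ 2 * deriv (deriv w) x)) +
          1 / 2 * (C ^ 2 * deriv (deriv w) x - M) * x ^ 2 +
          (A * deriv w x - P) * x) ↔
    (∀ x : ℝ,
      ρ * v x =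
        (C * D * x * deriv (deriv v) x + B * deriv v x - R * x - Q) ^ 2 /
            (2 * (N - D ^ 2 * deriv (deriv v) x)) +
          lam / 2 *
            (Real.log (2 * Real.pi * Real.exp 1 * lam / (N - D ^ 2 * deriv (deriv v) x)) - 1) +
          1 / 2 * (C ^ 2 * deriv (deriv v) x - M) * x ^ 2 +
          (A * deriv v x - P) * x) :=
  stmt_7_general M N R P Q A B C D ρ lam α₀ α₁ α₂ hρ
end
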